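/- arXiv:2404.09741 — 5 statements merged into one kernel-verified Lean document; each statement's English description precedes it below -/
import Mathlib

section
/- Let Ω be a finite set with k := |Ω| > 1, let M ⊆ Δ^k be nonempty, and let m = (m_1, m_2, …) be any sequence with each m_i ∈ M. Then the set CP(n ↦ (1/n)∑_{i=1}^n m_i) of cluster points of the Cesàro averages is a nonempty closed connected subset of the closed convex hull of M. -/
open MeasureTheory Filter Topology

noncomputable section

/-- The set of probability vectors over a finite set `Ω`, i.e. the standard simplex
inside the Euclidean space `ℝ^Ω`. -/
def probVec (Ω : Type*) [Fintype Ω] : Set (EuclideanSpace ℝ Ω) :=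
  {p | (∀ x, 0 ≤ p x) ∧ ∑ x, p x = 1}

/-- The relative-frequency vector of the first `n` terms of `ω`. -/
def relFreq {Ω : Type*} [Fintype Ω] [DecidableEq Ω] (ω : ℕ → Ω) (n : ℕ) :
    EuclideanSpace ℝ Ω :=
  WithLp.toLp 2 (fun x => (((Finset.range n).filter fun i => ω i = x).card : ℝ) / n)

/-- The set of cluster points of a sequence in a topological space. -/
def clusterPts {X : Type*} [TopologicalSpace X] (a : ℕ → X) : Set X :=
  {c | MapClusterPt c atTop a}

/-- Cesàro averages of a sequence of vectors. -/
def cesaro {Ω : Type*} [Fintype Ω] (m : ℕ → EuclideanSpace ℝ Ω) (n : ℕ) :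
    EuclideanSpace ℝ Ω :=
  (n : ℝ)⁻¹ • ∑ i ∈ Finset.range n, m i

/-- `μ` is the infinite (Ionescu-Tulcea) independent product of the probability vectors `m i`,
characterized by its values on cylinder sets. -/
def IsIT {Ω : Type*} [Fintype Ω] [MeasurableSpace Ω] (m : ℕ → EuclideanSpace ℝ Ω)
    (μ : Measure (ℕ → Ω)) : Prop :=
  ∀ (n : ℕ) (x : Fin n → Ω),
    μ {ω | ∀ i : Fin n, ω (i : ℕ) = x i} = ∏ i : Fin n, ENNReal.ofReal (m i.val (x i))

end


/-! The Cesàro averages eventually lie in the compact set `closure (convexHull ℝ M)`, so they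
have cluster points, all inside it, and consecutive averages differ by `O(1/n)`. A sequence in
a compact set whose steps tend to zero has a connected cluster set: if the cluster set split
into two disjoint closed pieces `A` and `B`, the sequence would pass from near `A` to near `B`
infinitely often with small steps, hence visit the gap between their thickenings infinitely
often, producing a cluster point in neither piece. -/

open Metric Set

lemma Nat.exists_le_and_not_succ_of_le {p : ℕ → Prop} {n m : ℕ} (hnm : n ≤ m) (hn : p n)
    (hm : ¬ p m) : ∃ k, n ≤ k ∧ p k ∧ ¬ p (k + 1) := by
  by_contra! h
  exact hm (Nat.le_induction hn (fun k hk hpk => h k hk hpk) m hnm)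

lemma clusterPts_subset_of_eventually_mem {X : Type*} [TopologicalSpace X] {a : ℕ → X}
    {K : Set X} (hK : IsClosed K) (haK : ∀ᶠ n in atTop, a n ∈ K) : clusterPts a ⊆ K :=
  fun _ hc => hK.closure_subset (hc.mem_closure_of_mem _ haK)

lemma frequently_mem_thickening_diff {X : Type*} [PseudoMetricSpace X] {a : ℕ → X} {A : Set X}
    {δ ε : ℝ}
    (hstep : ∀ᶠ n in atTop, dist (a (n + 1)) (a n) < ε)
    (hin : ∃ᶠ n in atTop, a n ∈ thickening δ A)
    (hout : ∃ᶠ n in atTop, a n ∉ thickening δ A) :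
    ∃ᶠ n in atTop, a n ∈ thickening (δ + ε) A \ thickening δ A := by
  refine frequently_atTop.mpr fun N => ?_
  obtain ⟨N₀, hN₀⟩ := eventually_atTop.mp hstep
  obtain ⟨n, hn, hnA⟩ := frequently_atTop.mp hin (max N N₀)
  obtain ⟨m, hnm, hmA⟩ := frequently_atTop.mp hout n
  obtain ⟨k, hk, hkA, hk'A⟩ :=
    Nat.exists_le_and_not_succ_of_le (p := fun k => a k ∈ thickening δ A) hnm hnA hmA
  refine ⟨k + 1, by omega, ?_, hk'A⟩
  obtain ⟨z, hz, hkz⟩ := mem_thickening_iff.mp hkA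
  refine mem_thickening_iff.mpr ⟨z, hz, ?_⟩
  calc dist (a (k + 1)) z ≤ dist (a (k + 1)) (a k) + dist (a k) z := dist_triangle _ _ _
    _ < ε + δ := add_lt_add (hN₀ k (by omega)) hkz
    _ = δ + ε := add_comm ε δ

section ClusterPts

variable {X : Type*} [MetricSpace X] {a : ℕ → X}

theorem isPreconnected_clusterPts_of_tendsto_dist_succ {K : Set X} (hK : IsCompact K)
    (haK : ∀ᶠ n in atTop, a n ∈ K)
    (hstep : Tendsto (fun n => dist (a (n + 1)) (a n)) atTop (𝓝 0)) :
    IsPreconnected (clusterPts a) := by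
  have hL : IsClosed (clusterPts a) := isClosed_setOfPred_clusterPt
  have hLK := clusterPts_subset_of_eventually_mem hK.isClosed haK
  rw [isPreconnected_iff_subset_of_fully_disjoint_closed hL]
  intro u v hu hv huv huv_disj
  by_contra! h
  obtain ⟨x, hxL, hxv⟩ := not_subset.mp h.2
  obtain ⟨y, hyL, hyu⟩ := not_subset.mp h.1
  set A := clusterPts a ∩ u
  set B := clusterPts a ∩ v
  have hxA : x ∈ A := ⟨hxL, (huv hxL).resolve_right hxv⟩
  have hyB : y ∈ B := ⟨hyL, (huv hyL).resolve_left hyu⟩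
  have hAB : Disjoint A B := huv_disj.mono inter_subset_right inter_subset_right
  obtain ⟨δ, hδ, hδAB⟩ := hAB.exists_thickenings
    (hK.of_isClosed_subset (hL.inter hu) (inter_subset_left.trans hLK)) (hL.inter hv)
  have hvisit {C : Set X} {c : X} (hc : c ∈ C) (hcL : c ∈ clusterPts a) :
      ∃ᶠ n in atTop, a n ∈ thickening (δ / 2) C :=
    MapClusterPt.frequently hcL
      (isOpen_thickening.mem_nhds (self_subset_thickening (half_pos hδ) C hc))
  have hnear (C : Set X) : thickening (δ / 2) C ⊆ thickening δ C :=
    thickening_mono (by linarith) C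
  -- Small steps force infinitely many visits to the gap between the two thickenings.
  have hgap := frequently_mem_thickening_diff (hstep.eventually_lt_const (half_pos hδ))
    (hvisit hxA hxL)
    ((hvisit hyB hyL).mono fun n hnB hnA => hδAB.ne_of_mem (hnear A hnA) (hnear B hnB) rfl)
  set D := (thickening (δ / 2) A)ᶜ ∩ (thickening (δ / 2) B)ᶜ
  have hD : IsClosed D := isOpen_thickening.isClosed_compl.inter isOpen_thickening.isClosed_compl
  have hgapD : ∃ᶠ n in atTop, a n ∈ D ∩ K := by
    refine (hgap.and_eventually haK).mono
      fun n ⟨⟨hnδA, hnA⟩, hnK⟩ => ⟨⟨hnA, fun hnB => ?_⟩, hnK⟩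
    rw [add_halves] at hnδA
    exact hδAB.ne_of_mem hnδA (hnear B hnB) rfl
  obtain ⟨c, ⟨⟨hcA, hcB⟩, -⟩, hc⟩ :=
    (hK.inter_left hD).exists_mapClusterPt_of_frequently hgapD
  rcases huv hc with hcu | hcv
  · exact hcA (self_subset_thickening (half_pos hδ) A ⟨hc, hcu⟩)
  · exact hcB (self_subset_thickening (half_pos hδ) B ⟨hc, hcv⟩)

theorem isConnected_clusterPts_of_tendsto_dist_succ {K : Set X} (hK : IsCompact K)
    (haK : ∀ᶠ n in atTop, a n ∈ K)
    (hstep : Tendsto (fun n => dist (a (n + 1)) (a n)) atTop (𝓝 0)) :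
    IsConnected (clusterPts a) :=
  ⟨let ⟨c, _, hc⟩ := hK.exists_mapClusterPt_of_frequently haK.frequently; ⟨c, hc⟩,
    isPreconnected_clusterPts_of_tendsto_dist_succ hK haK hstep⟩

end ClusterPts

lemma probVec_subset_closedBall (Ω : Type*) [Fintype Ω] : probVec Ω ⊆ closedBall 0 1 := by
  rintro p ⟨hp0, hp1⟩
  have hp_le_one (x : Ω) : p x ≤ 1 :=
    hp1 ▸ Finset.single_le_sum (fun i _ => hp0 i) (Finset.mem_univ x)
  rw [mem_closedBall_zero_iff, EuclideanSpace.norm_eq, Real.sqrt_le_one]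
  calc ∑ x, ‖p x‖ ^ 2 ≤ ∑ x, p x := Finset.sum_le_sum fun x _ => by
        rw [Real.norm_eq_abs, sq_abs]; nlinarith [hp0 x, hp_le_one x]
    _ = 1 := hp1

section Cesaro

variable {Ω : Type*} [Fintype Ω] {m : ℕ → EuclideanSpace ℝ Ω}

lemma cesaro_mem_convexHull {M : Set (EuclideanSpace ℝ Ω)} (hm : ∀ i, m i ∈ M) {n : ℕ}
    (hn : n ≠ 0) : cesaro m n ∈ convexHull ℝ M := by
  rw [cesaro, Finset.smul_sum]
  refine (convex_convexHull ℝ M).sum_mem (fun _ _ => by positivity) ?_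
    fun i _ => subset_convexHull ℝ M (hm i)
  simp [hn]

lemma norm_cesaro_le {C : ℝ} (hC : ∀ i, ‖m i‖ ≤ C) (n : ℕ) :
    ‖cesaro m n‖ ≤ C := by
  rcases Nat.eq_zero_or_pos n with rfl | hn
  · simpa [cesaro] using (norm_nonneg _).trans (hC 0)
  rw [cesaro, norm_smul, Real.norm_of_nonneg (by positivity), inv_mul_le_iff₀ (by positivity)]
  calc ‖∑ i ∈ Finset.range n, m i‖
      ≤ ∑ i ∈ Finset.range n, ‖m i‖ := norm_sum_le _ _
    _ ≤ n * C := by simpa using Finset.sum_le_sum fun i (_ : i ∈ Finset.range n) => hC i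

lemma cesaro_succ_sub (n : ℕ) :
    cesaro m (n + 1) - cesaro m n = ((n : ℝ) + 1)⁻¹ • (m n - cesaro m n) := by
  rcases Nat.eq_zero_or_pos n with rfl | hn
  · simp [cesaro]
  have hn' : (n : ℝ) ≠ 0 := by positivity
  have hinv : ((n : ℝ) + 1)⁻¹ - (n : ℝ)⁻¹ = -(((n : ℝ) + 1)⁻¹ * (n : ℝ)⁻¹) := by
    field_simp; ring
  simp only [cesaro, Finset.sum_range_succ, Nat.cast_add, Nat.cast_one]
  linear_combination (norm := module) hinv • ∑ i ∈ Finset.range n, m i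

lemma tendsto_dist_cesaro_succ {C : ℝ} (hC : ∀ i, ‖m i‖ ≤ C) :
    Tendsto (fun n => dist (cesaro m (n + 1)) (cesaro m n)) atTop (𝓝 0) := by
  have hbound (n : ℕ) :
      dist (cesaro m (n + 1)) (cesaro m n) ≤ 2 * C * (1 / ((n : ℝ) + 1)) := by
    rw [dist_eq_norm, cesaro_succ_sub, norm_smul, Real.norm_of_nonneg (by positivity)]
    calc ((n : ℝ) + 1)⁻¹ * ‖m n - cesaro m n‖ ≤ ((n : ℝ) + 1)⁻¹ * (C + C) :=
          mul_le_mul_of_nonneg_left ((norm_sub_le _ _).trans (add_le_add (hC n)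
            (norm_cesaro_le hC n))) (by positivity)
      _ = 2 * C * (1 / ((n : ℝ) + 1)) := by ring
  refine squeeze_zero (fun _ => dist_nonneg) hbound ?_
  simpa using tendsto_one_div_add_atTop_nhds_zero_nat.const_mul (2 * C)

end Cesaro

theorem stmt3_general {Ω : Type*} [Fintype Ω]
    (M : Set (EuclideanSpace ℝ Ω)) (hMsub : M ⊆ probVec Ω)
    (m : ℕ → EuclideanSpace ℝ Ω) (hm : ∀ i, m i ∈ M) :
    (clusterPts (cesaro m)).Nonempty ∧ IsClosed (clusterPts (cesaro m)) ∧
      IsConnected (clusterPts (cesaro m)) ∧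
      clusterPts (cesaro m) ⊆ closure (convexHull ℝ M) := by
  have hM : M ⊆ closedBall 0 1 := hMsub.trans (probVec_subset_closedBall Ω)
  have hK : IsCompact (closure (convexHull ℝ M)) :=
    (isBounded_convexHull.mpr (isBounded_closedBall.subset hM)).isCompact_closure
  have haK : ∀ᶠ n in atTop, cesaro m n ∈ closure (convexHull ℝ M) :=
    (eventually_ne_atTop 0).mono fun n hn => subset_closure (cesaro_mem_convexHull hm hn)
  have hconn : IsConnected (clusterPts (cesaro m)) :=
    isConnected_clusterPts_of_tendsto_dist_succ hK haK
      (tendsto_dist_cesaro_succ fun i => mem_closedBall_zero_iff.mp (hM (hm i)))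
  exact ⟨hconn.nonempty, isClosed_setOfPred_clusterPt, hconn,
    clusterPts_subset_of_eventually_mem isClosed_closure haK⟩

/-- For any sequence taking values in a nonempty `M ⊆ Δ^k`, the set of cluster
points of its Cesàro averages is a nonempty closed connected subset of the closed convex hull
of `M`. -/
theorem stmt3 {Ω : Type*} [Fintype Ω] (hcard : 1 < Fintype.card Ω)
    (M : Set (EuclideanSpace ℝ Ω)) (hM : M.Nonempty) (hMsub : M ⊆ probVec Ω)
    (m : ℕ → EuclideanSpace ℝ Ω) (hm : ∀ i, m i ∈ M) :
    (clusterPts (cesaro m)).Nonempty ∧ IsClosed (clusterPts (cesaro m)) ∧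
      IsConnected (clusterPts (cesaro m)) ∧
      clusterPts (cesaro m) ⊆ closure (convexHull ℝ M) :=
  stmt3_general M hMsub m hm
end

section
/- Let Ω be a finite set with k := |Ω| > 1, let M ⊆ Δ^k be nonempty, and let m = (m_1, m_2, …) be a sequence with each m_i ∈ M. Then there exists a sequence m̃ = (m̃_1, m̃_2, …) with each m̃_i ∈ M such that every element of M is a cluster point of (m̃_i) with respect to the Euclidean metric and CP(n ↦ (1/n)∑_{i=1}^n m_i) = CP(n ↦ (1/n)∑_{i=1}^n m̃_i). -/
open MeasureTheory Filter Topology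

/-!
Since `M` is separable, some sequence `u` in `M` has every point of `M` as a cluster point.
Overwrite `m` by `u` along the perfect squares: the modified sequence still contains `u` as a
subsequence, and since the squares have density zero and all vectors in the simplex have norm
at most `1`, the Cesàro averages change by `O(√n / n) → 0`, so their cluster points are unchanged.
-/

open Finset

lemma norm_le_one_of_mem_probVec {Ω : Type*} [Fintype Ω] {p : EuclideanSpace ℝ Ω}
    (hp : p ∈ probVec Ω) : ‖p‖ ≤ 1 := by
  rw [EuclideanSpace.norm_eq, Real.sqrt_le_one]
  calc ∑ x, ‖p x‖ ^ 2 ≤ ∑ x, p x := by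
        refine sum_le_sum fun x _ => ?_
        have hle : p x ≤ 1 := hp.2 ▸ single_le_sum (fun i _ => hp.1 i) (mem_univ x)
        rw [Real.norm_eq_abs, sq_abs]
        nlinarith [hp.1 x]
    _ = 1 := hp.2

/-- Run through a dense sequence, repeating each of its terms infinitely often. -/
lemma exists_seq_forall_mapClusterPt (X : Type*) [TopologicalSpace X]
    [TopologicalSpace.SeparableSpace X] [Nonempty X] :
    ∃ u : ℕ → X, ∀ x, MapClusterPt x atTop u := by
  refine ⟨fun k => TopologicalSpace.denseSeq X (Nat.unpair k).1, fun x => ?_⟩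
  rw [mapClusterPt_iff_frequently]
  intro s hs
  obtain ⟨j, hj⟩ := (TopologicalSpace.denseRange_denseSeq X).exists_mem_open
    isOpen_interior ⟨x, mem_interior_iff_mem_nhds.2 hs⟩
  refine frequently_atTop.2 fun N => ⟨Nat.pair j N, Nat.right_le_pair j N, ?_⟩
  simpa only [Nat.unpair_pair] using interior_subset hj

lemma MapClusterPt.of_tendsto_dist {X : Type*} [PseudoMetricSpace X] {a b : ℕ → X} {c : X}
    (hab : Tendsto (fun n => dist (a n) (b n)) atTop (𝓝 0)) (hc : MapClusterPt c atTop a) :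
    MapClusterPt c atTop b := by
  rw [Metric.nhds_basis_ball.mapClusterPt_iff_frequently] at hc ⊢
  intro ε hε
  have hclose : ∀ᶠ n in atTop, dist (a n) (b n) < ε / 2 :=
    hab.eventually (Iio_mem_nhds (half_pos hε))
  refine ((hc (ε / 2) (half_pos hε)).and_eventually hclose).mono fun n ⟨hn, hn'⟩ => ?_
  rw [Metric.mem_ball] at hn ⊢
  linarith [dist_triangle_left (b n) c (a n)]

lemma clusterPts_eq_of_tendsto_dist {X : Type*} [PseudoMetricSpace X] {a b : ℕ → X}
    (hab : Tendsto (fun n => dist (a n) (b n)) atTop (𝓝 0)) : clusterPts a = clusterPts b := by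
  have hba : Tendsto (fun n => dist (b n) (a n)) atTop (𝓝 0) := by
    simpa only [dist_comm] using hab
  ext c
  exact ⟨(·.of_tendsto_dist hab), (·.of_tendsto_dist hba)⟩

lemma dist_cesaro_le {Ω : Type*} [Fintype Ω] {a b : ℕ → EuclideanSpace ℝ Ω} {C : ℝ}
    (P : ℕ → Prop) [DecidablePred P] (hab : ∀ i, ¬P i → a i = b i)
    (hC : ∀ i, ‖a i - b i‖ ≤ C) (n : ℕ) :
    dist (cesaro a n) (cesaro b n) ≤ C * #{i ∈ range n | P i} / n := by
  have hsum : ‖∑ i ∈ range n, (a i - b i)‖ ≤ #{i ∈ range n | P i} * C :=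
    calc ‖∑ i ∈ range n, (a i - b i)‖
        ≤ ∑ i ∈ range n, ‖a i - b i‖ := norm_sum_le _ _
      _ = ∑ i ∈ range n with P i, ‖a i - b i‖ := by
          refine (sum_filter_of_ne fun i _ hi => ?_).symm
          contrapose! hi
          simp [hab i hi]
      _ ≤ #{i ∈ range n | P i} * C := by
          simpa using sum_le_card_nsmul _ _ C fun i _ => hC i
  rw [dist_eq_norm, cesaro, cesaro, ← smul_sub, ← sum_sub_distrib, norm_smul, norm_inv,
    Real.norm_natCast, mul_comm C, div_eq_inv_mul]
  exact mul_le_mul_of_nonneg_left hsum (by positivity)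

lemma card_filter_isSquare_range_le (n : ℕ) : #{i ∈ range n | IsSquare i} ≤ Nat.sqrt n + 1 := by
  calc #{i ∈ range n | IsSquare i}
      ≤ #((range (Nat.sqrt n + 1)).image fun r => r * r) := by
        refine card_le_card fun i hi => ?_
        obtain ⟨hin, r, rfl⟩ := mem_filter.1 hi
        exact mem_image.2 ⟨r, mem_range.2 (Nat.lt_succ_of_le
          (Nat.le_sqrt.2 (mem_range.1 hin).le)), rfl⟩
    _ ≤ Nat.sqrt n + 1 := card_image_le.trans (card_range _).le

lemma tendsto_card_filter_isSquare_range_div :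
    Tendsto (fun n : ℕ => (#{i ∈ range n | IsSquare i} : ℝ) / n) atTop (𝓝 0) := by
  have hlim : Tendsto (fun n : ℕ => 2 / √(n : ℝ)) atTop (𝓝 0) :=
    tendsto_const_nhds.div_atTop (Real.tendsto_sqrt_atTop.comp tendsto_natCast_atTop_atTop)
  refine squeeze_zero' (Eventually.of_forall fun n => by positivity) ?_ hlim
  filter_upwards [eventually_ge_atTop 1] with n hn
  have hn' : (1 : ℝ) ≤ n := by exact_mod_cast hn
  have hsqrt : 1 ≤ √(n : ℝ) := Real.one_le_sqrt.2 hn'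
  have hcard : (#{i ∈ range n | IsSquare i} : ℝ) ≤ 2 * √(n : ℝ) := by
    have hle : (#{i ∈ range n | IsSquare i} : ℝ) ≤ Nat.sqrt n + 1 := by
      exact_mod_cast card_filter_isSquare_range_le n
    linarith [Real.nat_sqrt_le_real_sqrt (a := n)]
  calc (#{i ∈ range n | IsSquare i} : ℝ) / n ≤ 2 * √(n : ℝ) / n := by gcongr
    _ = 2 / √(n : ℝ) := by
        rw [div_eq_div_iff (by positivity) (by positivity), mul_assoc, Real.mul_self_sqrt
          (by positivity)]

theorem stmt4_general {Ω : Type*} [Fintype Ω]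
    (M : Set (EuclideanSpace ℝ Ω)) (hM : M.Nonempty) (hMsub : M ⊆ probVec Ω)
    (m : ℕ → EuclideanSpace ℝ Ω) (hm : ∀ i, m i ∈ M) :
    ∃ mt : ℕ → EuclideanSpace ℝ Ω, (∀ i, mt i ∈ M) ∧
      (∀ p ∈ M, MapClusterPt p atTop mt) ∧
      clusterPts (cesaro m) = clusterPts (cesaro mt) := by
  have : Nonempty M := hM.to_subtype
  obtain ⟨u, hu⟩ := exists_seq_forall_mapClusterPt M
  set mt : ℕ → EuclideanSpace ℝ Ω := fun i => if IsSquare i then u (Nat.sqrt i) else m i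
  have hmtM : ∀ i, mt i ∈ M := fun i => by
    by_cases hi : IsSquare i <;> simp [mt, hi, hm i]
  refine ⟨mt, hmtM, fun p hp => ?_, clusterPts_eq_of_tendsto_dist ?_⟩
  · have hsq : mt ∘ (fun k => k * k) = fun k => (u k : EuclideanSpace ℝ Ω) := by
      funext k
      simp [mt, Nat.sqrt_eq]
    refine MapClusterPt.of_comp (tendsto_atTop_mono Nat.le_mul_self tendsto_id) ?_
    rw [hsq]
    exact (hu ⟨p, hp⟩).continuousAt_comp continuous_subtype_val.continuousAt
  · have hdiff : ∀ i, ‖m i - mt i‖ ≤ 2 := fun i =>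
      (norm_sub_le _ _).trans (by linarith [norm_le_one_of_mem_probVec (hMsub (hm i)),
        norm_le_one_of_mem_probVec (hMsub (hmtM i))])
    have hlim := tendsto_card_filter_isSquare_range_div.const_mul 2
    rw [mul_zero] at hlim
    refine squeeze_zero (fun n => dist_nonneg) (fun n => ?_) hlim
    simpa only [mul_div_assoc] using dist_cesaro_le IsSquare (fun i hi => by simp [mt, hi]) hdiff n

/-- Any sequence in `M` can be modified to a sequence in `M` having every
element of `M` as a cluster point, without changing the set of cluster points of the Cesàro
averages. -/
theorem stmt4 {Ω : Type*} [Fintype Ω] (hcard : 1 < Fintype.card Ω)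
    (M : Set (EuclideanSpace ℝ Ω)) (hM : M.Nonempty) (hMsub : M ⊆ probVec Ω)
    (m : ℕ → EuclideanSpace ℝ Ω) (hm : ∀ i, m i ∈ M) :
    ∃ mt : ℕ → EuclideanSpace ℝ Ω, (∀ i, mt i ∈ M) ∧
      (∀ p ∈ M, MapClusterPt p atTop mt) ∧
      clusterPts (cesaro m) = clusterPts (cesaro mt) :=
  stmt4_general M hM hMsub m hm
end

section
/- Let Ω be a finite set with k := |Ω| > 1, let m = (m_1, m_2, …) be a sequence of probability measures on Ω, and suppose m ∈ Δ^k is a cluster point of the sequence (m_i) with respect to the Euclidean metric. Then there exists a selection rule S : ℕ → {0,1} selecting infinitely many indices such that IT(m)({ω ∈ Ω^ℕ : CP(n ↦ r_n(ω_S)) = {m}}) = 1, where ω_S is the subsequence of ω at the indices selected by S. -/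
open MeasureTheory Filter Topology

/-!
Pass to a subsequence `f` along which `m ∘ f → p` and select exactly its indices. For an
outcome `x₀`, the centered count `∑ j < n, (1[ω (f j) = x₀] - m (f j) x₀)` is a sum of
independent, centered terms bounded by `1`, so its second moment is at most `n`, and Chebyshev
bounds the probability that it exceeds `k³` at time `n = k⁴` by `1 / k²`. By Borel–Cantelli it
is eventually at most `k³` at the times `k⁴`, and since it moves by at most `1` per step it is
`o(n)`. So the relative frequencies of the selected subsequence differ by `o(1)` from the Cesàro
means of `m ∘ f`, which tend to `p`.

`IsIT` only prescribes `μ` on cylinders, so every estimate bounds an event by a finite union of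
cylinders; this uses subadditivity of the outer measure and no measurability.
-/

open Finset
open scoped ENNReal

section ProductWeights

variable {ι κ Ω : Type*} [Fintype ι] [DecidableEq ι] [Fintype κ] [Fintype Ω] {w : ι → Ω → ℝ}

lemma prod_ite_mul_ite {M : Type*} [CommMonoid M] (i j : ι) (a b : ι → M) :
    ∏ k, (if k = i then a k else 1) * (if k = j then b k else 1) = a i * b j := by
  rw [prod_mul_distrib, Fintype.prod_ite_eq', Fintype.prod_ite_eq']

lemma sum_prod_mul_prod (φ : ι → Ω → ℝ) :
    ∑ x : ι → Ω, (∏ k, w k (x k)) * ∏ k, φ k (x k) = ∏ k, ∑ a, w k a * φ k a := by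
  simp_rw [Fintype.prod_sum, prod_mul_distrib]

lemma sum_prod_mul_apply (hw1 : ∀ i, ∑ a, w i a = 1) (i : ι) (g : Ω → ℝ) :
    ∑ x : ι → Ω, (∏ k, w k (x k)) * g (x i) = ∑ a, w i a * g a := by
  have h := sum_prod_mul_prod (w := w) fun k a => if k = i then g a else 1
  simp_rw [Fintype.prod_ite_eq'] at h
  rw [h, ← Fintype.prod_ite_eq' i fun k => ∑ a, w k a * g a]
  refine prod_congr rfl fun k _ => ?_
  split_ifs <;> simp [hw1]

lemma sum_prod_mul_apply_mul_apply (hw1 : ∀ i, ∑ a, w i a = 1) {i j : ι} (hij : i ≠ j)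
    (g h : Ω → ℝ) :
    ∑ x : ι → Ω, (∏ k, w k (x k)) * (g (x i) * h (x j)) =
      (∑ a, w i a * g a) * ∑ a, w j a * h a := by
  have H := sum_prod_mul_prod (w := w)
    fun k a => (if k = i then g a else 1) * (if k = j then h a else 1)
  simp_rw [prod_ite_mul_ite] at H
  rw [H, ← prod_ite_mul_ite i j (fun k => ∑ a, w k a * g a) (fun k => ∑ a, w k a * h a)]
  refine prod_congr rfl fun k _ => ?_
  by_cases hki : k = i <;> by_cases hkj : k = j <;> simp_all

lemma sum_prod_mul_sq_sum_le_card (hw0 : ∀ i a, 0 ≤ w i a) (hw1 : ∀ i, ∑ a, w i a = 1)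
    {e : κ → ι} (he : Function.Injective e) {G : κ → Ω → ℝ}
    (hG0 : ∀ j, ∑ a, w (e j) a * G j a = 0) (hG1 : ∀ j a, |G j a| ≤ 1) :
    ∑ x : ι → Ω, (∏ k, w k (x k)) * (∑ j, G j (x (e j))) ^ 2 ≤ Fintype.card κ := by
  calc ∑ x : ι → Ω, (∏ k, w k (x k)) * (∑ j, G j (x (e j))) ^ 2
      = ∑ j, ∑ j', ∑ x : ι → Ω, (∏ k, w k (x k)) * (G j (x (e j)) * G j' (x (e j'))) := by
        simp_rw [sq, sum_mul_sum, mul_sum]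
        rw [sum_comm]
        exact sum_congr rfl fun _ _ => sum_comm
    _ = ∑ j, ∑ a, w (e j) a * G j a ^ 2 := by
        refine sum_congr rfl fun j _ => ?_
        rw [sum_eq_single j (fun j' _ hj' => by
          rw [sum_prod_mul_apply_mul_apply hw1 (he.ne (Ne.symm hj')), hG0, zero_mul])
          (by simp)]
        simp_rw [← sq, sum_prod_mul_apply hw1 (e j) fun a => G j a ^ 2]
    _ ≤ ∑ j, ∑ a, w (e j) a := by
        gcongr with j _ a
        exact mul_le_of_le_one_right (hw0 _ _) (by simpa using hG1 j a)
    _ = Fintype.card κ := by simp [hw1]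

lemma sum_filter_le_div_sq {α : Type*} [Fintype α] {P T : α → ℝ} (hP : ∀ x, 0 ≤ P x) {c : ℝ}
    (hc : 0 < c) : ∑ x with c ≤ |T x|, P x ≤ (∑ x, P x * T x ^ 2) / c ^ 2 := by
  rw [le_div_iff₀ (by positivity), sum_mul]
  calc ∑ x with c ≤ |T x|, P x * c ^ 2 ≤ ∑ x with c ≤ |T x|, P x * T x ^ 2 := by
        refine sum_le_sum fun x hx => mul_le_mul_of_nonneg_left ?_ (hP x)
        rw [← sq_abs (T x)]
        exact pow_le_pow_left₀ hc.le (mem_filter.mp hx).2 2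
    _ ≤ ∑ x, P x * T x ^ 2 :=
        sum_le_sum_of_subset_of_nonneg (filter_subset _ _) fun x _ _ =>
          mul_nonneg (hP x) (sq_nonneg _)

lemma sum_prod_filter_le_card_div_sq (hw0 : ∀ i a, 0 ≤ w i a) (hw1 : ∀ i, ∑ a, w i a = 1)
    {e : κ → ι} (he : Function.Injective e) {G : κ → Ω → ℝ}
    (hG0 : ∀ j, ∑ a, w (e j) a * G j a = 0) (hG1 : ∀ j a, |G j a| ≤ 1) {c : ℝ} (hc : 0 < c) :
    ∑ x : ι → Ω with c ≤ |∑ j, G j (x (e j))|, ∏ k, w k (x k) ≤ Fintype.card κ / c ^ 2 :=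
  (sum_filter_le_div_sq (fun x => prod_nonneg fun k _ => hw0 k (x k)) hc).trans
    (div_le_div_of_nonneg_right (sum_prod_mul_sq_sum_le_card hw0 hw1 he hG0 hG1) (by positivity))

end ProductWeights

namespace probVec

variable {Ω : Type*} [Fintype Ω] {q : EuclideanSpace ℝ Ω}

lemma apply_le_one (hq : q ∈ probVec Ω) (a : Ω) : q a ≤ 1 :=
  hq.2 ▸ single_le_sum (fun b _ => hq.1 b) (mem_univ a)

lemma abs_indicator_sub_le_one [DecidableEq Ω] (hq : q ∈ probVec Ω) (x₀ a : Ω) :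
    |(if a = x₀ then 1 else 0) - q x₀| ≤ 1 := by
  have h0 := hq.1 x₀
  have h1 := probVec.apply_le_one hq x₀
  rw [abs_le]
  split_ifs <;> constructor <;> linarith

lemma sum_mul_indicator_sub_eq_zero [DecidableEq Ω] (hq : q ∈ probVec Ω) (x₀ : Ω) :
    ∑ a, q a * ((if a = x₀ then 1 else 0) - q x₀) = 0 := by
  simp [mul_sub, sum_sub_distrib, ← sum_mul, hq.2]

end probVec

namespace IsIT

variable {Ω : Type*} [Fintype Ω] [MeasurableSpace Ω] {m : ℕ → EuclideanSpace ℝ Ω}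
  {μ : Measure (ℕ → Ω)}

lemma measure_univ (hμ : IsIT m μ) : μ Set.univ = 1 := by
  simpa using hμ 0 Fin.elim0

lemma measure_setOf_initial_le (hμ : IsIT m μ) (hm : ∀ i, m i ∈ probVec Ω) (N : ℕ)
    (P : (Fin N → Ω) → Prop) [DecidablePred P] :
    μ {ω | P fun i : Fin N => ω i} ≤ ENNReal.ofReal (∑ x with P x, ∏ i : Fin N, m i (x i)) := by
  have hcover : {ω : ℕ → Ω | P fun i : Fin N => ω i} ⊆
      ⋃ x ∈ univ.filter P, {ω | ∀ i : Fin N, ω i = x i} := by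
    intro ω hω
    simpa using ⟨_, hω, fun _ => rfl⟩
  calc μ {ω | P fun i : Fin N => ω i}
      ≤ ∑ x with P x, μ {ω | ∀ i : Fin N, ω i = x i} :=
        (measure_mono hcover).trans (measure_biUnion_finset_le _ _)
    _ = ∑ x with P x, ENNReal.ofReal (∏ i : Fin N, m i (x i)) :=
        sum_congr rfl fun x _ => by
          rw [hμ N x, ENNReal.ofReal_prod_of_nonneg fun (i : Fin N) _ => (hm i).1 (x i)]
    _ = ENNReal.ofReal (∑ x with P x, ∏ i : Fin N, m i (x i)) :=
        (ENNReal.ofReal_sum_of_nonneg fun x _ =>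
          prod_nonneg fun (i : Fin N) _ => (hm i).1 (x i)).symm

end IsIT

lemma Nat.le_sqrt_sqrt {m n : ℕ} : m ≤ n.sqrt.sqrt ↔ m ^ 4 ≤ n := by
  rw [Nat.le_sqrt', Nat.le_sqrt', ← pow_mul]

lemma abs_sub_le_of_abs_succ_sub_le {a : ℕ → ℝ} (ha : ∀ n, |a (n + 1) - a n| ≤ 1) {k n : ℕ}
    (hkn : k ≤ n) : |a n - a k| ≤ n - k := by
  have := dist_le_Ico_sum_of_dist_le (f := a) (d := fun _ => 1) hkn fun _ _ => by
    rw [Real.dist_eq, abs_sub_comm]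
    exact ha _
  simpa [Real.dist_eq, abs_sub_comm, Nat.cast_sub hkn] using this

lemma tendsto_div_of_eventually_abs_pow_four_le {a : ℕ → ℝ} (ha : ∀ n, |a (n + 1) - a n| ≤ 1)
    (h : ∀ᶠ k : ℕ in atTop, |a (k ^ 4)| ≤ k ^ 3) : Tendsto (fun n => a n / n) atTop (𝓝 0) := by
  have hr : Tendsto (fun n : ℕ => n.sqrt.sqrt) atTop atTop :=
    tendsto_atTop_atTop.mpr fun b => ⟨b ^ 4, fun n hn => Nat.le_sqrt_sqrt.mpr hn⟩
  refine squeeze_zero_norm' ?_ ((tendsto_const_div_atTop_nhds_zero_nat 15).comp hr)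
  filter_upwards [hr.eventually h, hr.eventually_ge_atTop 1] with n hk hk1
  set k := n.sqrt.sqrt
  have hkn : k ^ 4 ≤ n := Nat.le_sqrt_sqrt.mp le_rfl
  have hnk : n < (k + 1) ^ 4 := lt_of_not_ge fun h => (Nat.lt_succ_self k).not_ge
    (Nat.le_sqrt_sqrt.mpr h)
  have hkR : (1 : ℝ) ≤ k := by exact_mod_cast hk1
  have hknR : (k : ℝ) ^ 4 ≤ n := by exact_mod_cast hkn
  have hnkR : (n : ℝ) + 1 ≤ (k + 1) ^ 4 := by exact_mod_cast hnk
  have hgap := abs_sub_le_of_abs_succ_sub_le ha hkn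
  push_cast at hgap
  have han : |a n| ≤ 15 * k ^ 3 := by
    have h2 : (k : ℝ) ^ 2 ≤ k ^ 3 := pow_le_pow_right₀ hkR (by norm_num)
    have h1 : (k : ℝ) ≤ k ^ 3 := le_self_pow₀ hkR (by norm_num)
    calc |a n| ≤ |a (k ^ 4)| + |a n - a (k ^ 4)| := by
          linarith [abs_sub_abs_le_abs_sub (a n) (a (k ^ 4))]
      _ ≤ k ^ 3 + ((k + 1) ^ 4 - 1 - k ^ 4) := by linarith
      _ ≤ 15 * k ^ 3 := by nlinarith
  calc ‖a n / n‖ = |a n| / n := by rw [norm_div, Real.norm_eq_abs, Real.norm_natCast]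
    _ ≤ 15 * k ^ 3 / k ^ 4 := div_le_div₀ (by positivity) han (by positivity) hknR
    _ = 15 / k := by field_simp

section CenteredCount

variable {Ω : Type*} [Fintype Ω] [DecidableEq Ω]

def centeredCount (m : ℕ → EuclideanSpace ℝ Ω) (ω : ℕ → Ω) (x₀ : Ω) (n : ℕ) : ℝ :=
  ∑ j ∈ range n, ((if ω j = x₀ then 1 else 0) - m j x₀)

lemma relFreq_apply_sub_cesaro_apply (m : ℕ → EuclideanSpace ℝ Ω) (ω : ℕ → Ω) (n : ℕ)
    (x₀ : Ω) :
    relFreq ω n x₀ - cesaro m n x₀ = centeredCount m ω x₀ n / n := by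
  simp only [relFreq, cesaro, centeredCount, PiLp.smul_apply, WithLp.ofLp_sum, Finset.sum_apply,
    smul_eq_mul, natCast_card_filter, sum_sub_distrib]
  ring

lemma abs_centeredCount_succ_sub_le {m : ℕ → EuclideanSpace ℝ Ω} (hm : ∀ i, m i ∈ probVec Ω)
    (ω : ℕ → Ω) (x₀ : Ω) (n : ℕ) :
    |centeredCount m ω x₀ (n + 1) - centeredCount m ω x₀ n| ≤ 1 := by
  rw [centeredCount, centeredCount, sum_range_succ, add_sub_cancel_left]
  exact probVec.abs_indicator_sub_le_one (hm n) x₀ (ω n)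

namespace IsIT

variable [MeasurableSpace Ω] {m : ℕ → EuclideanSpace ℝ Ω} {μ : Measure (ℕ → Ω)} {f : ℕ → ℕ}

lemma measure_le_abs_centeredCount_le (hμ : IsIT m μ) (hm : ∀ i, m i ∈ probVec Ω)
    (hf : StrictMono f) (x₀ : Ω) (n : ℕ) {c : ℝ} (hc : 0 < c) :
    μ {ω | c ≤ |centeredCount (m ∘ f) (ω ∘ f) x₀ n|} ≤ ENNReal.ofReal (n / c ^ 2) := by
  let e : Fin n → Fin (f n) := fun j => ⟨f j, hf j.2⟩
  have he : Function.Injective e := fun j j' h => Fin.ext (hf.injective (congrArg Fin.val h))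
  let G : Fin n → Ω → ℝ := fun j a => (if a = x₀ then 1 else 0) - m (f j) x₀
  have hcount (ω : ℕ → Ω) :
      centeredCount (m ∘ f) (ω ∘ f) x₀ n = ∑ j, G j ((fun i : Fin (f n) => ω i) (e j)) :=
    (Fin.sum_univ_eq_sum_range (fun j => (if ω (f j) = x₀ then 1 else 0) - m (f j) x₀) n).symm
  simp_rw [hcount]
  refine (hμ.measure_setOf_initial_le hm (f n) fun x => c ≤ |∑ j, G j (x (e j))|).trans
    (ENNReal.ofReal_le_ofReal ?_)
  simpa only [Fintype.card_fin] using
    sum_prod_filter_le_card_div_sq (w := fun (i : Fin (f n)) a => m i a) (fun i a => (hm i).1 a)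
      (fun i => (hm i).2) he (fun j => probVec.sum_mul_indicator_sub_eq_zero (hm (f j)) x₀)
      (fun j a => probVec.abs_indicator_sub_le_one (hm (f j)) x₀ a) hc

lemma ae_eventually_abs_centeredCount_pow_four_le (hμ : IsIT m μ) (hm : ∀ i, m i ∈ probVec Ω)
    (hf : StrictMono f) (x₀ : Ω) :
    ∀ᵐ ω ∂μ, ∀ᶠ k : ℕ in atTop, |centeredCount (m ∘ f) (ω ∘ f) x₀ (k ^ 4)| ≤ k ^ 3 := by
  have hsum :
      ∑' k : ℕ, μ {ω | (k : ℝ) ^ 3 < |centeredCount (m ∘ f) (ω ∘ f) x₀ (k ^ 4)|} ≠ ∞ := by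
    refine ne_top_of_le_ne_top (b := ∑' k : ℕ, ENNReal.ofReal (1 / k ^ 2)) ?_
      (ENNReal.tsum_le_tsum fun k => ?_)
    · rw [← ENNReal.ofReal_tsum_of_nonneg (fun k => by positivity)
        (Real.summable_one_div_nat_pow.mpr one_lt_two)]
      exact ENNReal.ofReal_ne_top
    rcases k.eq_zero_or_pos with rfl | hk
    · simp [centeredCount]
    calc μ {ω | (k : ℝ) ^ 3 < |centeredCount (m ∘ f) (ω ∘ f) x₀ (k ^ 4)|}
        ≤ μ {ω | (k : ℝ) ^ 3 ≤ |centeredCount (m ∘ f) (ω ∘ f) x₀ (k ^ 4)|} :=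
          measure_mono (Set.ofPred_subset_ofPred.mpr fun _ => le_of_lt)
      _ ≤ ENNReal.ofReal ((k ^ 4 : ℕ) / ((k : ℝ) ^ 3) ^ 2) :=
          hμ.measure_le_abs_centeredCount_le hm hf x₀ _ (by positivity)
      _ = ENNReal.ofReal (1 / k ^ 2) := by
          congr 1
          field_simp
          push_cast
          ring
  filter_upwards [ae_eventually_notMem hsum] with ω hω
  exact hω.mono fun k hk => not_lt.mp hk

lemma ae_tendsto_relFreq_comp_sub_cesaro (hμ : IsIT m μ) (hm : ∀ i, m i ∈ probVec Ω)
    (hf : StrictMono f) :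
    ∀ᵐ ω ∂μ, Tendsto (fun n => relFreq (ω ∘ f) n - cesaro (m ∘ f) n) atTop (𝓝 0) := by
  filter_upwards [ae_all_iff.mpr (hμ.ae_eventually_abs_centeredCount_pow_four_le hm hf)]
    with ω hω
  refine (PiLp.homeomorph 2 _).isInducing.tendsto_nhds_iff.mpr
    (tendsto_pi_nhds.mpr fun x₀ => ?_)
  change Tendsto (fun n => (relFreq (ω ∘ f) n - cesaro (m ∘ f) n) x₀) atTop (𝓝 0)
  simp only [PiLp.sub_apply, relFreq_apply_sub_cesaro_apply]
  exact tendsto_div_of_eventually_abs_pow_four_le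
    (abs_centeredCount_succ_sub_le (fun i => hm (f i)) (ω ∘ f) x₀) (hω x₀)

end IsIT

end CenteredCount

lemma StrictMono.nth_mem_range_eq {f : ℕ → ℕ} (hf : StrictMono f) :
    Nat.nth (· ∈ Set.range f) = f := by
  have hinf : (Set.range f).Infinite := Set.infinite_range_of_injective hf.injective
  exact (Nat.nth_strictMono hinf).range_inj hf |>.mp (Nat.range_nth_of_infinite hinf)

lemma clusterPts_eq_singleton {X : Type*} [TopologicalSpace X] [T2Space X] {a : ℕ → X} {p : X}
    (h : Tendsto a atTop (𝓝 p)) : clusterPts a = {p} :=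
  Set.eq_singleton_iff_unique_mem.mpr
    ⟨h.mapClusterPt, fun _ hc => eq_of_nhds_neBot (ClusterPt.mono hc h)⟩

theorem stmt8_general {Ω : Type*} [Fintype Ω] [DecidableEq Ω] [MeasurableSpace Ω]
    (m : ℕ → EuclideanSpace ℝ Ω) (hm : ∀ i, m i ∈ probVec Ω)
    (p : EuclideanSpace ℝ Ω) (hcp : MapClusterPt p atTop m) :
    ∃ S : ℕ → Bool, {i | S i = true}.Infinite ∧
      ∀ μ : Measure (ℕ → Ω), IsIT m μ →
        μ {ω | clusterPts (relFreq fun n => ω (Nat.nth (fun i => S i = true) n)) = {p}} = 1 := by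
  classical
  obtain ⟨f, hf, hmf⟩ := hcp.tendsto_subseq
  refine ⟨fun i => decide (i ∈ Set.range f), by
    simpa only [decide_eq_true_eq, Set.ofPred_mem_eq] using
      Set.infinite_range_of_injective hf.injective, fun μ hμ => ?_⟩
  simp only [decide_eq_true_eq, hf.nth_mem_range_eq]
  have hces : Tendsto (cesaro (m ∘ f)) atTop (𝓝 p) := hmf.cesaro_smul
  have hae : ∀ᵐ ω ∂μ, clusterPts (relFreq (ω ∘ f)) = {p} :=
    (hμ.ae_tendsto_relFreq_comp_sub_cesaro hm hf).mono fun ω hω =>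
      clusterPts_eq_singleton (by simpa using hces.add hω)
  exact (measure_congr (ae_eq_univ.mpr (ae_iff.mp hae))).trans hμ.measure_univ

/-- If `p` is a cluster point of the sequence of measures `m`, then there is
a selection rule selecting infinitely many indices along which, `IT(m)`-almost surely, the
relative frequencies of the selected subsequence have `{p}` as their set of cluster points. -/
theorem stmt8 {Ω : Type*} [Fintype Ω] [DecidableEq Ω] [MeasurableSpace Ω]
    [MeasurableSingletonClass Ω] (hcard : 1 < Fintype.card Ω)
    (m : ℕ → EuclideanSpace ℝ Ω) (hm : ∀ i, m i ∈ probVec Ω)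
    (p : EuclideanSpace ℝ Ω) (hp : p ∈ probVec Ω) (hcp : MapClusterPt p atTop m) :
    ∃ S : ℕ → Bool, {i | S i = true}.Infinite ∧
      ∀ μ : Measure (ℕ → Ω), IsIT m μ →
        μ {ω | clusterPts (relFreq fun n => ω (Nat.nth (fun i => S i = true) n)) = {p}} = 1 :=
  stmt8_general m hm p hcp
end

section
/- Let Ω be a finite set with k := |Ω| > 1, let ω = (ω_1, ω_2, …) ∈ Ω^ℕ, let ℓ : Ω → ℝ, and let κ : ℕ → ℕ satisfy κ(n) → ∞ as n → ∞ and κ(n) ≤ n for all n. Define the estimator est_n := min{ (1/j)∑_{i=1}^j ℓ(ω_i) : κ(n) ≤ j ≤ n }. Then liminf_{n→∞} est_n = liminf_{n→∞} (1/n)∑_{i=1}^n ℓ(ω_i) = min{E_p[ℓ] : p ∈ CP(n ↦ r_n(ω))}, where E_p[ℓ] = ∑_{x ∈ Ω} ℓ(x)·p({x}). -/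
open MeasureTheory Filter Topology

/-!
The average `(1/n) ∑_{i<n} ℓ(ω_i)` is `E (r_n)` for the continuous map `E p = ∑ₓ ℓ x * p x`, and
all `r_n` lie in the compact cube `[0,1]^Ω`. Along an ultrafilter, `r_n` then converges whenever
its image does, so the cluster points of the averages are exactly the `E`-images of the cluster
points of `r_n`; the `liminf` of a bounded real sequence is its least cluster point.
The window minimum at `n` is at most the average at `n` and is attained at some `j_n ≥ κ n → ∞`,
which gives the same `liminf`.
-/

open Set in
theorem Filter.liminf_sInf_image_Icc_eq_liminf {α : Type*} [ConditionallyCompleteLinearOrder α]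
    {a : ℕ → α} (hbelow : BddBelow (range a)) (habove : BddAbove (range a))
    {κ : ℕ → ℕ} (hκ : Tendsto κ atTop atTop) (hκle : ∀ n, κ n ≤ n) :
    liminf (fun n => sInf (a '' Icc (κ n) n)) atTop = liminf a atTop := by
  have hwindow : ∀ n, ∃ j ∈ Icc (κ n) n, a j = sInf (a '' Icc (κ n) n) := fun n =>
    Set.Nonempty.csInf_mem ⟨a n, mem_image_of_mem a (right_mem_Icc.2 (hκle n))⟩
      ((finite_Icc _ _).image a)
  choose j hj hja using hwindow
  have hj_tendsto : Tendsto j atTop atTop := tendsto_atTop_mono (fun n => (hj n).1) hκ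
  rw [← funext hja]
  apply le_antisymm
  · refine liminf_le_liminf (.of_forall fun n => ?_)
      (hbelow.mono (range_comp_subset_range j a)).isBoundedUnder_of_range
      habove.isBoundedUnder_of_range.isCoboundedUnder_ge
    rw [hja]
    exact csInf_le ((finite_Icc _ _).image a).bddBelow
      (mem_image_of_mem a (right_mem_Icc.2 (hκle n)))
  · rw [← Function.comp_def, liminf_comp]
    exact liminf_le_liminf_of_le hj_tendsto hbelow.isBoundedUnder_of_range
      habove.isBoundedUnder_of_range.isCoboundedUnder_ge

theorem IsCompact.mapClusterPt_comp_iff {ι X Y : Type*} [TopologicalSpace X] [TopologicalSpace Y]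
    [T2Space Y] {K : Set X} (hK : IsCompact K) {F : Filter ι} {u : ι → X}
    (hu : ∀ᶠ i in F, u i ∈ K) {f : X → Y} (hf : Continuous f) {y : Y} :
    MapClusterPt y F (f ∘ u) ↔ ∃ p, MapClusterPt p F u ∧ f p = y := by
  refine ⟨fun hy => ?_, fun ⟨p, hp, hpy⟩ => hpy ▸ hp.continuousAt_comp hf.continuousAt⟩
  obtain ⟨U, hUF, hUy⟩ := mapClusterPt_iff_ultrafilter.1 hy
  obtain ⟨p, -, hUp⟩ := hK.ultrafilter_le_nhds (U.map u) (le_principal_iff.2 (hUF hu))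
  exact ⟨p, mapClusterPt_iff_ultrafilter.2 ⟨U, hUF, hUp⟩,
    tendsto_nhds_unique ((hf.tendsto p).comp hUp) hUy⟩

section CompactRange

variable {ι X α : Type*} [TopologicalSpace X] [ConditionallyCompleteLinearOrder α]
  [TopologicalSpace α] [OrderTopology α] {K : Set X} {f : X → α}

theorem IsCompact.bddBelow_range_comp (hK : IsCompact K) {u : ι → X} (hu : ∀ i, u i ∈ K)
    (hf : Continuous f) : BddBelow (Set.range (f ∘ u)) :=
  (hK.bddBelow_image hf.continuousOn).mono
    (Set.range_comp f u ▸ Set.image_mono (Set.range_subset_iff.2 hu))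

theorem IsCompact.bddAbove_range_comp (hK : IsCompact K) {u : ι → X} (hu : ∀ i, u i ∈ K)
    (hf : Continuous f) : BddAbove (Set.range (f ∘ u)) :=
  (hK.bddAbove_image hf.continuousOn).mono
    (Set.range_comp f u ▸ Set.image_mono (Set.range_subset_iff.2 hu))

theorem IsCompact.liminf_comp_eq_sInf_image_clusterPts (hK : IsCompact K) {u : ℕ → X}
    (hu : ∀ n, u n ∈ K) (hf : Continuous f) :
    liminf (f ∘ u) atTop = sInf (f '' clusterPts u) := by
  have hclusterPts : f '' clusterPts u = {y | MapClusterPt y atTop (f ∘ u)} :=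
    Set.ext fun _ => (hK.mapClusterPt_comp_iff (.of_forall hu) hf).symm
  rw [hclusterPts]
  exact (isLeast_mapClusterPt_liminf
    (hK.bddAbove_range_comp hu hf).isBoundedUnder_of_range.isCoboundedUnder_ge
    (hK.bddBelow_range_comp hu hf).isBoundedUnder_of_range).csInf_eq.symm

end CompactRange

theorem EuclideanSpace.isCompact_setOf_forall_apply_mem_Icc (ι : Type*) [Fintype ι] (a b : ℝ) :
    IsCompact {p : EuclideanSpace ℝ ι | ∀ i, p i ∈ Set.Icc a b} := by
  simpa [Set.preimage, Set.pi] using (EuclideanSpace.equiv ι ℝ).toHomeomorph.isCompact_preimage.2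
    (isCompact_univ_pi fun _ => isCompact_Icc (a := a) (b := b))

section relFreq

variable {Ω : Type*} [Fintype Ω] [DecidableEq Ω]

theorem relFreq_apply_mem_Icc (ω : ℕ → Ω) (n : ℕ) (x : Ω) :
    relFreq ω n x ∈ Set.Icc (0 : ℝ) 1 := by
  refine ⟨by unfold relFreq; positivity, div_le_one_of_le₀ ?_ n.cast_nonneg⟩
  exact_mod_cast (Finset.card_filter_le _ _).trans (Finset.card_range n).le

theorem inv_mul_sum_range_eq_sum_mul_relFreq (ω : ℕ → Ω) (ℓ : Ω → ℝ) (n : ℕ) :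
    (n : ℝ)⁻¹ * ∑ i ∈ Finset.range n, ℓ (ω i) = ∑ x, ℓ x * relFreq ω n x := by
  have hfiber : ∑ i ∈ Finset.range n, ℓ (ω i) =
      ∑ x, ((Finset.range n).filter fun i => ω i = x).card * ℓ x := by
    rw [← Finset.sum_fiberwise (Finset.range n) ω]
    refine Finset.sum_congr rfl fun x _ => ?_
    rw [Finset.sum_congr rfl fun i hi => by rw [(Finset.mem_filter.1 hi).2], Finset.sum_const,
      nsmul_eq_mul]
  simp only [hfiber, Finset.mul_sum, relFreq, PiLp.toLp_apply]
  exact Finset.sum_congr rfl fun x _ => by ring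

end relFreq

theorem stmt14_general {Ω : Type*} [Fintype Ω] [DecidableEq Ω]
    (ω : ℕ → Ω) (ℓ : Ω → ℝ) (κ : ℕ → ℕ)
    (hκ : Tendsto κ atTop atTop) (hκle : ∀ n, κ n ≤ n) :
    liminf (fun n : ℕ => sInf
        ((fun j : ℕ => (j : ℝ)⁻¹ * ∑ i ∈ Finset.range j, ℓ (ω i)) '' Set.Icc (κ n) n))
      atTop =
      liminf (fun n : ℕ => (n : ℝ)⁻¹ * ∑ i ∈ Finset.range n, ℓ (ω i)) atTop ∧
    liminf (fun n : ℕ => (n : ℝ)⁻¹ * ∑ i ∈ Finset.range n, ℓ (ω i)) atTop =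
      sInf ((fun p : EuclideanSpace ℝ Ω => ∑ x, ℓ x * p x) '' clusterPts (relFreq ω)) := by
  set E : EuclideanSpace ℝ Ω → ℝ := fun p => ∑ x, ℓ x * p x
  set K : Set (EuclideanSpace ℝ Ω) := {p | ∀ x, p x ∈ Set.Icc 0 1}
  have hK : IsCompact K := EuclideanSpace.isCompact_setOf_forall_apply_mem_Icc Ω 0 1
  have hfreq : ∀ n, relFreq ω n ∈ K := relFreq_apply_mem_Icc ω
  have hE : Continuous E := by fun_prop
  have hmean : (fun n : ℕ => (n : ℝ)⁻¹ * ∑ i ∈ Finset.range n, ℓ (ω i)) = E ∘ relFreq ω :=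
    funext (inv_mul_sum_range_eq_sum_mul_relFreq ω ℓ)
  rw [hmean]
  exact ⟨liminf_sInf_image_Icc_eq_liminf (hK.bddBelow_range_comp hfreq hE)
    (hK.bddAbove_range_comp hfreq hE) hκ hκle, hK.liminf_comp_eq_sInf_image_clusterPts hfreq hE⟩

/-- The Walley–Fine estimator `est n = min{(1/j)∑_{i≤j} ℓ(ω_i) : κ(n) ≤ j ≤ n}`
satisfies: its `liminf` equals the `liminf` of the gamble averages, which in turn equals the
minimum expectation of `ℓ` over the cluster points of the relative frequencies. -/
theorem stmt14 {Ω : Type*} [Fintype Ω] [DecidableEq Ω] (hcard : 1 < Fintype.card Ω)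
    (ω : ℕ → Ω) (ℓ : Ω → ℝ) (κ : ℕ → ℕ)
    (hκ : Tendsto κ atTop atTop) (hκle : ∀ n, κ n ≤ n) :
    liminf (fun n : ℕ => sInf
        ((fun j : ℕ => (j : ℝ)⁻¹ * ∑ i ∈ Finset.range j, ℓ (ω i)) '' Set.Icc (κ n) n))
      atTop =
      liminf (fun n : ℕ => (n : ℝ)⁻¹ * ∑ i ∈ Finset.range n, ℓ (ω i)) atTop ∧
    liminf (fun n : ℕ => (n : ℝ)⁻¹ * ∑ i ∈ Finset.range n, ℓ (ω i)) atTop =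
      sInf ((fun p : EuclideanSpace ℝ Ω => ∑ x, ℓ x * p x) '' clusterPts (relFreq ω)) :=
  stmt14_general ω ℓ κ hκ hκle
end

section
/- Let Ω be a finite set with k := |Ω| > 1 and let A ⊆ Ω with ∅ ⊊ A ⊊ Ω. Then for every function κ : ℕ → ℕ with κ(n) → ∞ as n → ∞ and κ(n) ≤ n for all n, there exists a sequence ω = (ω_1, ω_2, …) ∈ Ω^ℕ such that the limit lim_{n→∞} min{ r_j(ω)(A) : κ(n) ≤ j ≤ n } does not exist, where r_j(ω)(A) := (1/j)·#{1 ≤ i ≤ j : ω_i ∈ A}. -/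
open MeasureTheory Filter Topology

/-!
Alternate long blocks of points of `A` with long blocks of points outside `A`. If a block of
`A` runs from time `u` to time `v`, with `v` so large that `κ v ≥ 2u`, then every frequency in
the window `[κ v, v]` is at least `1/2`, hence so is the estimator at time `v`. If the next
block, outside `A`, runs up to time `4v`, then the frequency at time `4v`, and with it the
estimator, is at most `1/4`. Repeating this forever, the estimator is infinitely often `≥ 1/2`
and infinitely often `≤ 1/4`.
-/

open Finset

noncomputable section

def windowInf (κ : ℕ → ℕ) (F : ℕ → ℝ) (n : ℕ) : ℝ :=
  sInf (F '' Set.Icc (κ n) n)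

lemma le_windowInf {κ : ℕ → ℕ} {F : ℕ → ℝ} {n : ℕ} {c : ℝ} (hn : κ n ≤ n)
    (h : ∀ j ∈ Set.Icc (κ n) n, c ≤ F j) : c ≤ windowInf κ F n :=
  le_csInf ((Set.nonempty_Icc.2 hn).image F) (Set.forall_mem_image.2 h)

lemma windowInf_le {κ : ℕ → ℕ} {F : ℕ → ℝ} {n : ℕ} (hF : BddBelow (Set.range F))
    (hn : κ n ≤ n) : windowInf κ F n ≤ F n :=
  csInf_le (hF.mono (Set.image_subset_range _ _)) ⟨n, ⟨hn, le_rfl⟩, rfl⟩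

open Classical in
def freq (s : Set ℕ) (j : ℕ) : ℝ :=
  (j : ℝ)⁻¹ * #{i ∈ range j | i ∈ s}

lemma freq_nonneg (s : Set ℕ) (j : ℕ) : 0 ≤ freq s j := by
  unfold freq
  positivity

def blockUnion (u v : ℕ → ℕ) : Set ℕ :=
  ⋃ k, Set.Ico (u k) (v k)

section Blocks

variable {u v : ℕ → ℕ} {k j : ℕ}

open Classical in
lemma sub_le_card_filter_blockUnion (hj : j ≤ v k) :
    j - u k ≤ #{i ∈ range j | i ∈ blockUnion u v} := by
  rw [← Nat.card_Ico]
  refine card_le_card fun i hi => ?_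
  simp only [mem_Ico] at hi
  simp only [mem_filter, mem_range, blockUnion, Set.mem_iUnion, Set.mem_Ico]
  exact ⟨hi.2, k, hi.1, hi.2.trans_le hj⟩

open Classical in
lemma card_filter_blockUnion_le (huv : ∀ k, u k ≤ v k) (hvu : ∀ k, v k ≤ u (k + 1))
    (hj : j ≤ u (k + 1)) : #{i ∈ range j | i ∈ blockUnion u v} ≤ v k := by
  have hu : Monotone u := monotone_nat_of_le_succ fun k => (huv k).trans (hvu k)
  have hv : Monotone v := monotone_nat_of_le_succ fun k => (hvu k).trans (huv (k + 1))
  calc #{i ∈ range j | i ∈ blockUnion u v} ≤ #(range (v k)) := card_le_card fun i hi => ?_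
    _ = v k := card_range _
  simp only [mem_filter, mem_range, blockUnion, Set.mem_iUnion, Set.mem_Ico] at hi ⊢
  obtain ⟨hij, k', hk'i, hik'⟩ := hi
  rcases le_or_gt k' k with hk' | hk'
  · exact hik'.trans_le (hv hk')
  · have := hu (show k + 1 ≤ k' from hk')
    omega

lemma half_le_freq_blockUnion (hk : 0 < u k) (hj : 2 * u k ≤ j) (hjv : j ≤ v k) :
    1 / 2 ≤ freq (blockUnion u v) j := by
  classical
  have hcount : (j : ℝ) - u k ≤ #{i ∈ range j | i ∈ blockUnion u v} := by
    have := sub_le_card_filter_blockUnion (u := u) hjv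
    rw [← Nat.cast_sub (by omega)]
    exact_mod_cast this
  have hj' : (2 : ℝ) * u k ≤ j := by exact_mod_cast hj
  have hjpos : (0 : ℝ) < j := by exact_mod_cast (show 0 < j by omega)
  unfold freq
  rw [inv_mul_eq_div, le_div_iff₀ hjpos]
  linarith

lemma freq_blockUnion_le_quarter (huv : ∀ k, u k ≤ v k) (hvu : ∀ k, v k ≤ u (k + 1))
    (hnext : u (k + 1) = 4 * v k) : freq (blockUnion u v) (4 * v k) ≤ 1 / 4 := by
  classical
  have hcount : (#{i ∈ range (4 * v k) | i ∈ blockUnion u v} : ℝ) ≤ v k := by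
    exact_mod_cast card_filter_blockUnion_le huv hvu hnext.ge
  unfold freq
  rcases (Nat.zero_le (v k)).eq_or_lt with hv | hv
  · simp [← hv]
  · have hvpos : (0 : ℝ) < v k := by exact_mod_cast hv
    rw [inv_mul_eq_div, div_le_iff₀ (by positivity)]
    push_cast
    linarith

end Blocks

def switchTimes (g : ℕ → ℕ) : ℕ → ℕ
  | 0 => 1
  | k + 1 => 4 * g (2 * switchTimes g k)

lemma exists_switchTimes {κ : ℕ → ℕ} (hκ : Tendsto κ atTop atTop) :
    ∃ u v : ℕ → ℕ, ∀ k, 0 < u k ∧ 2 * u k ≤ κ (v k) ∧ 2 * u k ≤ v k ∧ u (k + 1) = 4 * v k := by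
  choose g hg using fun t => ((hκ.eventually_ge_atTop t).and (eventually_ge_atTop t)).exists
  refine ⟨switchTimes g, fun k => g (2 * switchTimes g k), fun k => ⟨?_, hg _ |>.1, hg _ |>.2, rfl⟩⟩
  induction k with
  | zero => exact Nat.one_pos
  | succ k ih =>
    have := (hg (2 * switchTimes g k)).2
    simp only [switchTimes]
    omega

theorem exists_not_tendsto_windowInf_freq {κ : ℕ → ℕ} (hκ : Tendsto κ atTop atTop)
    (hκle : ∀ n, κ n ≤ n) : ∃ s : Set ℕ, ¬ ∃ L, Tendsto (windowInf κ (freq s)) atTop (𝓝 L) := by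
  obtain ⟨u, v, hspec⟩ := exists_switchTimes hκ
  choose hu hκv h2uv hnext using hspec
  have huv : ∀ k, u k ≤ v k := fun k => by have := h2uv k; omega
  have hvu : ∀ k, v k ≤ u (k + 1) := fun k => by rw [hnext]; omega
  have hv : StrictMono v := strictMono_nat_of_lt_succ fun k => by
    have := hu k; have := h2uv k; have := h2uv (k + 1); have := hnext k
    omega
  refine ⟨blockUnion u v, fun ⟨L, hL⟩ => ?_⟩
  have hhigh : ∃ᶠ n in atTop, 1 / 2 ≤ windowInf κ (freq (blockUnion u v)) n :=
    frequently_atTop.2 fun N => ⟨v N, hv.id_le N, le_windowInf (hκle _) fun j hj =>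
      half_le_freq_blockUnion (hu N) ((hκv N).trans hj.1) hj.2⟩
  have hlow : ∃ᶠ n in atTop, windowInf κ (freq (blockUnion u v)) n ≤ 1 / 4 :=
    frequently_atTop.2 fun N => ⟨4 * v N, by have : N ≤ v N := hv.id_le N; omega,
      (windowInf_le ⟨0, Set.forall_mem_range.2 (freq_nonneg _)⟩ (hκle _)).trans
        (freq_blockUnion_le_quarter huv hvu (hnext N))⟩
  have := ge_of_tendsto_of_frequently hL hhigh
  have := le_of_tendsto_of_frequently hL hlow
  linarith

end

theorem stmt15_general {Ω : Type*} [Fintype Ω] [DecidableEq Ω]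
    (A : Finset Ω) (hA : A.Nonempty) (hA' : A ≠ Finset.univ)
    (κ : ℕ → ℕ) (hκ : Tendsto κ atTop atTop) (hκle : ∀ n, κ n ≤ n) :
    ∃ ω : ℕ → Ω, ¬ ∃ L : ℝ, Tendsto
      (fun n : ℕ => sInf ((fun j : ℕ => (j : ℝ)⁻¹ *
          (((Finset.range j).filter fun i => ω i ∈ A).card : ℝ)) '' Set.Icc (κ n) n))
      atTop (nhds L) := by
  classical
  obtain ⟨a, ha⟩ := hA
  obtain ⟨b, hb⟩ : ∃ b, b ∉ A := by simpa [Finset.eq_univ_iff_forall] using hA'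
  obtain ⟨s, hs⟩ := exists_not_tendsto_windowInf_freq hκ hκle
  have hmem : ∀ i, (if i ∈ s then a else b) ∈ A ↔ i ∈ s := fun i => by
    by_cases hi : i ∈ s <;> simp [hi, ha, hb]
  refine ⟨fun i => if i ∈ s then a else b, ?_⟩
  simp only [hmem]
  exact hs

/-- For any admissible `κ` and any nontrivial event `A`, there is a data
sequence on which the Walley–Fine estimator of the relative frequency of `A` fails to
converge. -/
theorem stmt15 {Ω : Type*} [Fintype Ω] [DecidableEq Ω] (hcard : 1 < Fintype.card Ω)
    (A : Finset Ω) (hA : A.Nonempty) (hA' : A ≠ Finset.univ)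
    (κ : ℕ → ℕ) (hκ : Tendsto κ atTop atTop) (hκle : ∀ n, κ n ≤ n) :
    ∃ ω : ℕ → Ω, ¬ ∃ L : ℝ, Tendsto
      (fun n : ℕ => sInf ((fun j : ℕ => (j : ℝ)⁻¹ *
          (((Finset.range j).filter fun i => ω i ∈ A).card : ℝ)) '' Set.Icc (κ n) n))
      atTop (nhds L) :=
  stmt15_general A hA hA' κ hκ hκle
end
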